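/- For the FAR(1) process with ‖Φ‖_L < 1 and approximation X_t^{(m)} = Σ_{j=0}^{m−1} Φ^j(ε_{t−j}) + Σ_{j=m}^∞ Φ^j(ε^{(m)}_{t−j}) built from independent copies ε^{(m)} of the innovations, the approximation error satisfies υ₄(X_t − X_t^{(m)}) ≤ 2 · (‖Φ‖_L^m / (1 − ‖Φ‖_L)) · υ₄(ε₀), hence Σ_{m=1}^∞ υ₄(X_t − X_t^{(m)}) < ∞. -/

import Mathlib

/-! The series for `X_t` and `X_t^{(m)}` agree in their first `m` terms, so
`X_t - X_t^{(m)} = ∑_{j ≥ m} Φ^j (ε_{t-j} - ε^{(m)}_{t-j})`. Both innovations in the `j`-th term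
are distributed like `ε₀`, so that term has `L⁴` norm at most `2 ‖Φ‖^j υ₄(ε₀)`; Minkowski's
inequality, carried to the limit by Fatou's lemma, sums these to `2 ‖Φ‖^m / (1 - ‖Φ‖) ⬝ υ₄(ε₀)`,
which is geometric, hence summable, in `m`. -/

open MeasureTheory ProbabilityTheory Filter
open scoped ENNReal

theorem hasSum_nat_add_sub_of_hasSum_ite {E : Type*} [AddCommGroup E] [TopologicalSpace E]
    [IsTopologicalAddGroup E] {f g : ℕ → E} {a b : E} {m : ℕ}
    (ha : HasSum f a) (hb : HasSum (fun j => if j < m then f j else g j) b) :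
    HasSum (fun k => f (k + m) - g (k + m)) (a - b) := by
  have hhead : ∑ j ∈ Finset.range m, (f j - if j < m then f j else g j) = 0 :=
    Finset.sum_eq_zero fun j hj => by simp [Finset.mem_range.mp hj]
  simpa [hhead] using (hasSum_nat_add_iff' m).mpr (ha.sub hb)

theorem ContinuousLinearMap.norm_pow_apply_le {𝕜 E : Type*} [NontriviallyNormedField 𝕜]
    [SeminormedAddCommGroup E] [NormedSpace 𝕜 E] (A : E →L[𝕜] E) (j : ℕ) (x : E) :
    ‖(A ^ j) x‖ ≤ ‖A‖ ^ j * ‖x‖ := by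
  induction j generalizing x with
  | zero => simp
  | succ j ih =>
    calc ‖(A ^ (j + 1)) x‖ = ‖(A ^ j) (A x)‖ := by rw [pow_succ]; rfl
      _ ≤ ‖A‖ ^ j * (‖A‖ * ‖x‖) := (ih _).trans (by gcongr; exact A.le_opNorm x)
      _ = ‖A‖ ^ (j + 1) * ‖x‖ := by ring

section LpSeminorm

variable {Ω E : Type*} [MeasurableSpace Ω] {μ : Measure Ω} [NormedAddCommGroup E]

theorem aestronglyMeasurable_of_hasSum {g : ℕ → Ω → E} {S : Ω → E}
    (hg : ∀ j, AEStronglyMeasurable (g j) μ) (hS : ∀ᵐ ω ∂μ, HasSum (fun j => g j ω) (S ω)) :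
    AEStronglyMeasurable S μ :=
  aestronglyMeasurable_of_tendsto_ae atTop
    (fun _ => Finset.aestronglyMeasurable_fun_sum _ fun j _ => hg j)
    (hS.mono fun _ h => h.tendsto_sum_nat)

theorem eLpNorm_le_tsum_of_hasSum {p : ℝ≥0∞} (hp : 1 ≤ p) {g : ℕ → Ω → E} {S : Ω → E}
    (hg : ∀ j, AEStronglyMeasurable (g j) μ) (hS : ∀ᵐ ω ∂μ, HasSum (fun j => g j ω) (S ω)) :
    eLpNorm S p μ ≤ ∑' j, eLpNorm (g j) p μ := by
  have hpartial : ∀ n, eLpNorm (∑ j ∈ Finset.range n, g j) p μ ≤ ∑' j, eLpNorm (g j) p μ :=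
    fun n => (eLpNorm_sum_le (fun j _ => hg j) hp).trans (ENNReal.sum_le_tsum _)
  refine (Lp.eLpNorm_lim_le_liminf_eLpNorm (fun n => Finset.aestronglyMeasurable_sum _
    fun j _ => hg j) S (hS.mono fun _ h => ?_)).trans
    (liminf_le_of_frequently_le' (.of_forall hpartial))
  simpa only [Finset.sum_apply] using h.tendsto_sum_nat

theorem rpow_integral_norm_pow_eq_toReal_eLpNorm {f : Ω → E} (hf : AEStronglyMeasurable f μ)
    {n : ℕ} (hn : n ≠ 0) :
    (∫ ω, ‖f ω‖ ^ n ∂μ) ^ ((1 : ℝ) / n) = (eLpNorm f n μ).toReal := by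
  rw [toReal_eLpNorm hf, lpNorm_eq_integral_norm_rpow_toReal (by exact_mod_cast hn) (by simp) hf]
  simp [Real.rpow_natCast]

theorem memLp_of_integrable_norm_pow {f : Ω → E} (hf : AEStronglyMeasurable f μ) {n : ℕ}
    (hn : n ≠ 0) (hint : Integrable (fun ω => ‖f ω‖ ^ n) μ) : MemLp f n μ :=
  (integrable_norm_rpow_iff hf (by exact_mod_cast hn) (by simp)).1
    (by simpa [Real.rpow_natCast] using hint)

theorem eLpNorm_pow_apply_le {𝕜 : Type*} [NontriviallyNormedField 𝕜] [NormedSpace 𝕜 E]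
    (A : E →L[𝕜] E) (j : ℕ) (f : Ω → E) (p : ℝ≥0∞) :
    eLpNorm (fun ω => (A ^ j) (f ω)) p μ ≤ ENNReal.ofReal (‖A‖ ^ j) * eLpNorm f p μ :=
  eLpNorm_le_mul_eLpNorm_of_ae_le_mul (.of_forall fun ω => A.norm_pow_apply_le j (f ω)) p

variable [MeasurableSpace E] [BorelSpace E] [SecondCountableTopology E]
  {Ω' : Type*} [MeasurableSpace Ω'] {ν : Measure Ω'}

theorem eLpNorm_sub_le_two_mul_of_identDistrib {p : ℝ≥0∞} (hp : 1 ≤ p) {f f' : Ω → E}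
    {g : Ω' → E} (hf : IdentDistrib f g μ ν) (hf' : IdentDistrib f' g μ ν) :
    eLpNorm (f - f') p μ ≤ 2 * eLpNorm g p ν :=
  calc eLpNorm (f - f') p μ ≤ eLpNorm f p μ + eLpNorm f' p μ :=
        eLpNorm_sub_le hf.aemeasurable_fst.aestronglyMeasurable
          hf'.aemeasurable_fst.aestronglyMeasurable hp
    _ = 2 * eLpNorm g p ν := by rw [hf.eLpNorm_eq, hf'.eLpNorm_eq, two_mul]

theorem eLpNorm_le_of_hasSum_pow_apply_sub {𝕜 : Type*} [NontriviallyNormedField 𝕜]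
    [NormedSpace 𝕜 E] {A : E →L[𝕜] E} (hA : ‖A‖ < 1) {p : ℝ≥0∞} (hp : 1 ≤ p) (m : ℕ)
    {u v : ℕ → Ω → E} {g : Ω' → E} (hu : ∀ k, IdentDistrib (u k) g μ ν)
    (hv : ∀ k, IdentDistrib (v k) g μ ν) {S : Ω → E}
    (hS : ∀ ω, HasSum (fun k => (A ^ (k + m)) (u k ω) - (A ^ (k + m)) (v k ω)) (S ω)) :
    eLpNorm S p μ ≤ ENNReal.ofReal (2 * (‖A‖ ^ m / (1 - ‖A‖))) * eLpNorm g p ν := by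
  simp_rw [← map_sub] at hS
  have hterm : ∀ k, eLpNorm (fun ω => (A ^ (k + m)) ((u k - v k) ω)) p μ ≤
      ENNReal.ofReal (‖A‖ ^ (k + m)) * (2 * eLpNorm g p ν) := fun k =>
    (eLpNorm_pow_apply_le A (k + m) _ p).trans
      (by gcongr; exact eLpNorm_sub_le_two_mul_of_identDistrib hp (hu k) (hv k))
  have hmeas : ∀ k, AEStronglyMeasurable (fun ω => (A ^ (k + m)) ((u k - v k) ω)) μ := fun k =>
    (A ^ (k + m)).continuous.comp_aestronglyMeasurable
      ((hu k).aemeasurable_fst.sub (hv k).aemeasurable_fst).aestronglyMeasurable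
  have hgeom : HasSum (fun k => ‖A‖ ^ (k + m)) (‖A‖ ^ m / (1 - ‖A‖)) := by
    simpa only [pow_add, div_eq_inv_mul] using
      (hasSum_geometric_of_lt_one (norm_nonneg A) hA).mul_right (‖A‖ ^ m)
  calc eLpNorm S p μ ≤ ∑' k, eLpNorm (fun ω => (A ^ (k + m)) ((u k - v k) ω)) p μ :=
        eLpNorm_le_tsum_of_hasSum hp hmeas (.of_forall hS)
    _ ≤ ∑' k, ENNReal.ofReal (‖A‖ ^ (k + m)) * (2 * eLpNorm g p ν) := ENNReal.tsum_le_tsum hterm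
    _ = ENNReal.ofReal (2 * (‖A‖ ^ m / (1 - ‖A‖))) * eLpNorm g p ν := by
        rw [ENNReal.tsum_mul_right, ← ENNReal.ofReal_tsum_of_nonneg (fun k => by positivity)
          hgeom.summable, hgeom.tsum_eq, ENNReal.ofReal_mul zero_le_two, ENNReal.ofReal_ofNat]
        ring

end LpSeminorm

theorem far1_m_dependent_approximation_general
    {H : Type*} [NormedAddCommGroup H] [InnerProductSpace ℝ H]
    [TopologicalSpace.SeparableSpace H] [MeasurableSpace H] [BorelSpace H]
    {Ω : Type*} [MeasurableSpace Ω] (μ : Measure Ω)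
    (Φ : H →L[ℝ] H) (hΦ : ‖Φ‖ < 1)
    (ε : ℤ → Ω → H) (hmeas : ∀ t, Measurable (ε t))
    (hident : ∀ t, Measure.map (ε t) μ = Measure.map (ε 0) μ)
    (hmom : Integrable (fun ω => ‖ε 0 ω‖ ^ 4) μ)
    -- independent copies of the innovation sequence, one copy for each m
    (ε' : ℕ → ℤ → Ω → H) (hmeas' : ∀ m t, Measurable (ε' m t))
    (hident' : ∀ m t, Measure.map (ε' m t) μ = Measure.map (ε 0) μ)
    (t : ℤ) (X : Ω → H) (Xm : ℕ → Ω → H)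
    (hX : ∀ ω, HasSum (fun j : ℕ => (Φ ^ j) (ε (t - j) ω)) (X ω))
    (hXm : ∀ m ω, HasSum
      (fun j : ℕ => if j < m then (Φ ^ j) (ε (t - j) ω) else (Φ ^ j) (ε' m (t - j) ω))
      (Xm m ω)) :
    (∀ m : ℕ, (∫ ω, ‖X ω - Xm m ω‖ ^ 4 ∂μ) ^ ((1 : ℝ) / 4) ≤
        2 * (‖Φ‖ ^ m / (1 - ‖Φ‖)) * (∫ ω, ‖ε 0 ω‖ ^ 4 ∂μ) ^ ((1 : ℝ) / 4)) ∧
      Summable (fun m : ℕ => (∫ ω, ‖X ω - Xm m ω‖ ^ 4 ∂μ) ^ ((1 : ℝ) / 4)) := by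
  have hε₀ : AEStronglyMeasurable (ε 0) μ := (hmeas 0).aestronglyMeasurable
  have hε₀_ne_top : eLpNorm (ε 0) 4 μ ≠ ∞ :=
    (memLp_of_integrable_norm_pow hε₀ four_ne_zero hmom).eLpNorm_ne_top
  have hbound : ∀ m : ℕ, (∫ ω, ‖X ω - Xm m ω‖ ^ 4 ∂μ) ^ ((1 : ℝ) / 4) ≤
      2 * (‖Φ‖ ^ m / (1 - ‖Φ‖)) * (∫ ω, ‖ε 0 ω‖ ^ 4 ∂μ) ^ ((1 : ℝ) / 4) := by
    intro m
    have hS ω := hasSum_nat_add_sub_of_hasSum_ite (hX ω) (hXm m ω)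
    have hS_meas : AEStronglyMeasurable (fun ω => X ω - Xm m ω) μ :=
      aestronglyMeasurable_of_hasSum (fun k => by fun_prop) (.of_forall hS)
    have key := eLpNorm_le_of_hasSum_pow_apply_sub (μ := μ) hΦ (p := 4) (by norm_num) m
      (fun k => ⟨(hmeas _).aemeasurable, (hmeas 0).aemeasurable, hident _⟩)
      (fun k => ⟨(hmeas' m _).aemeasurable, (hmeas 0).aemeasurable, hident' m _⟩) hS
    calc (∫ ω, ‖X ω - Xm m ω‖ ^ 4 ∂μ) ^ ((1 : ℝ) / 4)
        = (eLpNorm (fun ω => X ω - Xm m ω) 4 μ).toReal := by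
          exact_mod_cast rpow_integral_norm_pow_eq_toReal_eLpNorm hS_meas four_ne_zero
      _ ≤ (ENNReal.ofReal (2 * (‖Φ‖ ^ m / (1 - ‖Φ‖))) * eLpNorm (ε 0) 4 μ).toReal :=
          ENNReal.toReal_mono (by finiteness) key
      _ = 2 * (‖Φ‖ ^ m / (1 - ‖Φ‖)) * (∫ ω, ‖ε 0 ω‖ ^ 4 ∂μ) ^ ((1 : ℝ) / 4) := by
          rw [ENNReal.toReal_mul, ENNReal.toReal_ofReal (by have := sub_pos.2 hΦ; positivity)]
          exact_mod_cast congrArg _ (rpow_integral_norm_pow_eq_toReal_eLpNorm hε₀ four_ne_zero).symm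
  refine ⟨hbound, .of_nonneg_of_le (fun m => by positivity) hbound ?_⟩
  exact ((summable_geometric_of_lt_one (norm_nonneg Φ) hΦ).mul_left
    (2 / (1 - ‖Φ‖) * (∫ ω, ‖ε 0 ω‖ ^ 4 ∂μ) ^ ((1 : ℝ) / 4))).congr fun m => by ring

/-- For the FAR(1) process with `‖Φ‖_L < 1` and the `m`-dependent approximation
`X_t^{(m)} = ∑_{j<m} Φ^j (ε_{t-j}) + ∑_{j≥m} Φ^j (ε^{(m)}_{t-j})` built from independent copies
of the innovations, `υ₄(X_t − X_t^{(m)}) ≤ 2 ‖Φ‖^m/(1−‖Φ‖) ⬝ υ₄(ε₀)`, hence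
`∑_{m=1}^∞ υ₄(X_t − X_t^{(m)}) < ∞`. -/
theorem far1_m_dependent_approximation
    {H : Type*} [NormedAddCommGroup H] [InnerProductSpace ℝ H] [CompleteSpace H]
    [TopologicalSpace.SeparableSpace H] [MeasurableSpace H] [BorelSpace H]
    {Ω : Type*} [MeasurableSpace Ω] (μ : Measure Ω) [IsProbabilityMeasure μ]
    (Φ : H →L[ℝ] H) (hΦ : ‖Φ‖ < 1)
    (ε : ℤ → Ω → H) (hmeas : ∀ t, Measurable (ε t))
    (hindep : ProbabilityTheory.iIndepFun ε μ)
    (hident : ∀ t, Measure.map (ε t) μ = Measure.map (ε 0) μ)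
    (hmean : ∀ t, ∫ ω, ε t ω ∂μ = 0)
    (hmom : Integrable (fun ω => ‖ε 0 ω‖ ^ 4) μ)
    -- independent copies of the innovation sequence, one copy for each m
    (ε' : ℕ → ℤ → Ω → H) (hmeas' : ∀ m t, Measurable (ε' m t))
    (hident' : ∀ m t, Measure.map (ε' m t) μ = Measure.map (ε 0) μ)
    (t : ℤ) (X : Ω → H) (Xm : ℕ → Ω → H)
    (hX : ∀ ω, HasSum (fun j : ℕ => (Φ ^ j) (ε (t - j) ω)) (X ω))
    (hXm : ∀ m ω, HasSum
      (fun j : ℕ => if j < m then (Φ ^ j) (ε (t - j) ω) else (Φ ^ j) (ε' m (t - j) ω))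
      (Xm m ω)) :
    (∀ m : ℕ, (∫ ω, ‖X ω - Xm m ω‖ ^ 4 ∂μ) ^ ((1 : ℝ) / 4) ≤
        2 * (‖Φ‖ ^ m / (1 - ‖Φ‖)) * (∫ ω, ‖ε 0 ω‖ ^ 4 ∂μ) ^ ((1 : ℝ) / 4)) ∧
      Summable (fun m : ℕ => (∫ ω, ‖X ω - Xm m ω‖ ^ 4 ∂μ) ^ ((1 : ℝ) / 4)) :=
  far1_m_dependent_approximation_general μ Φ hΦ ε hmeas hident hmom ε' hmeas' hident' t X Xm hX hXm
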